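/- Privacy amplification via degrading channels: if Q : V → Z is (ε, δ)-locally differentially private with ε = O(1), then the composition Q ∘ W^η, where W^η is the η-degrading channel, is (O(ηε), O(ηδ))-locally differentially private. Concretely, for every pair v, v' ∈ V and measurable S ⊆ Z, Pr[Q(W^η(v')) ∈ S] ≤ (1 + η e^ε (e^ε - 1)) · Pr[Q(W^η(v)) ∈ S] + e^ε η δ. -/

import Mathlib

/-!
Write `A = p v S`, `B = p v' S` and `M` for the average of `p u S` over `u`; the output
probabilities of `Q ∘ W^η` on `v` and `v'` are `X = η A + (1 - η) M` and `X + η (B - A)`.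
LDP gives `B - A ≤ (e^ε - 1) A + δ`, and averaging LDP over the uniform input gives
`A ≤ e^ε M + δ`, hence `A ≤ e^ε X + (1 - η) δ`. Substituting the second bound into the
first yields the factor `1 + η e^ε (e^ε - 1)` and the additive term `e^ε η δ`.
-/

theorem le_mul_average_add {ι : Type*} [Fintype ι] [Nonempty ι] {g : ι → ℝ} {a c δ : ℝ}
    (h : ∀ u, a ≤ c * g u + δ) : a ≤ c * ((∑ u, g u) / Fintype.card ι) + δ := by
  have hcard : (0 : ℝ) < Fintype.card ι := by exact_mod_cast Fintype.card_pos
  have hsum : (Fintype.card ι : ℝ) * a ≤ c * ∑ u, g u + Fintype.card ι * δ := by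
    simpa [Finset.sum_add_distrib, Finset.mul_sum] using
      Finset.card_nsmul_le_sum Finset.univ (fun u => c * g u + δ) a (fun u _ => h u)
  rw [mul_div_assoc', div_add' _ _ _ hcard.ne', le_div_iff₀ hcard]
  linarith

theorem degrading_mix_le {A B M E δ η : ℝ} (hA : 0 ≤ A) (hE : 1 ≤ E) (hδ : 0 ≤ δ)
    (hη0 : 0 ≤ η) (hη1 : η ≤ 1) (hBA : B ≤ E * A + δ) (hAM : A ≤ E * M + δ) :
    η * B + (1 - η) * M ≤ (1 + η * E * (E - 1)) * (η * A + (1 - η) * M) + E * η * δ := by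
  have hA_mix : (E - 1) * A ≤ E * (E - 1) * (η * A + (1 - η) * M) + (E - 1) * (1 - η) * δ := by
    have h₁ : (E - 1) * (η * A) ≤ (E - 1) * (η * (E * A)) := by
      gcongr; exact le_mul_of_one_le_left hA hE
    have h₂ : (E - 1) * ((1 - η) * A) ≤ (E - 1) * ((1 - η) * (E * M + δ)) := by
      gcongr
    linarith
  have hδ_mix : (E - 1) * (1 - η) * δ + δ ≤ E * δ := by
    nlinarith [mul_nonneg (mul_nonneg (sub_nonneg.2 hE) hη0) hδ]
  have hB := mul_le_mul_of_nonneg_left hBA hη0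
  have := mul_le_mul_of_nonneg_left (add_le_add hA_mix hδ_mix) hη0
  linarith

theorem stmt_5_general {V Z : Type*} [Fintype V] [MeasurableSpace Z]
    (p : V → Set Z → ℝ) (hp : ∀ v S, 0 ≤ p v S)
    (ε δ η : ℝ) (hε : 0 < ε) (hδ : 0 ≤ δ) (hη0 : 0 ≤ η) (hη1 : η ≤ 1)
    (hLDP : ∀ v v' : V, ∀ S : Set Z, MeasurableSet S →
      p v S ≤ Real.exp ε * p v' S + δ)
    (v v' : V) (S : Set Z) (hS : MeasurableSet S) :
    η * p v' S + (1 - η) * ((∑ u, p u S) / Fintype.card V)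
      ≤ (1 + η * Real.exp ε * (Real.exp ε - 1)) *
          (η * p v S + (1 - η) * ((∑ u, p u S) / Fintype.card V))
        + Real.exp ε * η * δ := by
  have : Nonempty V := ⟨v⟩
  exact degrading_mix_le (hp v S) (Real.one_le_exp hε.le) hδ hη0 hη1 (hLDP v' v S hS)
    (le_mul_average_add fun u => hLDP v u S hS)

/-- Privacy amplification via an η-degrading channel: composing an (ε,δ)-LDP
randomizer with the η-degrading channel yields the stated multiplicative and
additive privacy guarantee. The probability that `Q (W^η v) ∈ S` equals
`η * p v S + (1-η) * (average over u of p u S)`. -/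
theorem stmt_5 {V Z : Type*} [Fintype V] [Nonempty V] [MeasurableSpace Z]
    (p : V → Set Z → ℝ) (hp : ∀ v S, 0 ≤ p v S)
    (ε δ η : ℝ) (hε : 0 < ε) (hδ : 0 ≤ δ) (hη0 : 0 ≤ η) (hη1 : η ≤ 1)
    (hLDP : ∀ v v' : V, ∀ S : Set Z, MeasurableSet S →
      p v S ≤ Real.exp ε * p v' S + δ)
    (v v' : V) (S : Set Z) (hS : MeasurableSet S) :
    η * p v' S + (1 - η) * ((∑ u, p u S) / Fintype.card V)
      ≤ (1 + η * Real.exp ε * (Real.exp ε - 1)) *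
          (η * p v S + (1 - η) * ((∑ u, p u S) / Fintype.card V))
        + Real.exp ε * η * δ :=
  stmt_5_general p hp ε δ η hε hδ hη0 hη1 hLDP v v' S hS
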